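/- (Safe screening rule, inactive features.) Suppose β̄ ∈ ℝᵖ minimizes P over ℝᵖ, ᾱ = Xβ̄ − y, and the link condition holds: for every j, either β̄_j = 0 and |η_j(ᾱ)| ≤ η₀, or β̄_j = sign(η_j(ᾱ))·(|η_j(ᾱ)| − λ₁/(2λ₂)) and |η_j(ᾱ)| ≥ η₀. Then for every α ∈ ℝⁿ and β ∈ ℝᵖ with r = √(2·(P(β) − D(α))), if a coordinate j satisfies |x₍·j₎ᵀα| + ‖x₍·j₎‖·r < 2√(λ₀λ₂) + λ₁, then β̄_j = 0. -/

import Mathlib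

/-!
`Φ` is the conjugate of the coordinatewise penalty `b ↦ λ₁|b| + λ₂b² + λ₀[b ≠ 0]`, so
`Φ(t) ≤ b t + penalty(b)` for every `b`. Summing over the coordinates of any `β` shows that
`D(α) + ½‖ᾱ - α‖² ≤ P(β)` with `ᾱ = Xβ - y`; at the minimiser `β̄` this gives
`‖ᾱ - α‖² ≤ 2(P(β) - D(α)) = r²`, so `ᾱ` lies in the ball of radius `r` around `α`.
By Cauchy–Schwarz `|x_jᵀᾱ| ≤ |x_jᵀα| + ‖x_j‖ r < 2√(λ₀λ₂) + λ₁`, which rules out the second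
alternative of the link condition and forces `β̄_j = 0`.
-/

open Finset

noncomputable section

namespace SafeScreening

variable {m ι : Type*} [Fintype m] [Fintype ι]

def penalty (l0 l1 l2 b : ℝ) : ℝ :=
  l1 * |b| + l2 * b ^ 2 + l0 * if b ≠ 0 then 1 else 0

def phi (l0 l1 l2 t : ℝ) : ℝ :=
  if 2 * √(l0 * l2) + l1 < |t| then l0 - (|t| - l1) ^ 2 / (4 * l2) else 0

def primal (l0 l1 l2 : ℝ) (X : Matrix m ι ℝ) (y : m → ℝ) (β : ι → ℝ) : ℝ :=
  (1 / 2) * ∑ i, (y i - ∑ j, X i j * β j) ^ 2 + ∑ j, penalty l0 l1 l2 (β j)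

def dual (l0 l1 l2 : ℝ) (X : Matrix m ι ℝ) (y : m → ℝ) (α : m → ℝ) : ℝ :=
  -(1 / 2) * ∑ i, α i ^ 2 - ∑ i, y i * α i + ∑ j, phi l0 l1 l2 (∑ i, X i j * α i)

lemma mul_sub_mul_sq_le_sq_div {l2 : ℝ} (hl2 : 0 < l2) (s c : ℝ) :
    s * c - l2 * s ^ 2 ≤ c ^ 2 / (4 * l2) := by
  rw [le_div_iff₀ (by positivity)]
  nlinarith [sq_nonneg (2 * l2 * s - c)]

lemma two_sqrt_mul_mul_le {l0 l2 : ℝ} (hl0 : 0 ≤ l0) (hl2 : 0 ≤ l2) (s : ℝ) :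
    2 * √(l0 * l2) * s ≤ l0 + l2 * s ^ 2 := by
  have h := two_mul_le_add_sq (√l0) (√l2 * s)
  rwa [mul_pow, Real.sq_sqrt hl0, Real.sq_sqrt hl2, ← mul_assoc, mul_assoc 2,
    ← Real.sqrt_mul hl0] at h

lemma phi_nonpos {l0 l2 : ℝ} (hl0 : 0 ≤ l0) (hl2 : 0 < l2) (l1 t : ℝ) : phi l0 l1 l2 t ≤ 0 := by
  unfold phi
  split_ifs with ht
  · have hroot : 2 * √(l0 * l2) ≤ |t| - l1 := by linarith
    have hsq : 4 * (l0 * l2) ≤ (|t| - l1) ^ 2 := by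
      nlinarith [Real.sq_sqrt (mul_nonneg hl0 hl2.le), Real.sqrt_nonneg (l0 * l2)]
    rw [sub_nonpos, le_div_iff₀ (by positivity)]
    linarith
  · rfl

lemma phi_le_mul_add_penalty {l0 l2 : ℝ} (hl0 : 0 ≤ l0) (hl2 : 0 < l2) (l1 t b : ℝ) :
    phi l0 l1 l2 t ≤ b * t + penalty l0 l1 l2 b := by
  rcases eq_or_ne b 0 with rfl | hb
  · simpa [penalty] using phi_nonpos hl0 hl2 l1 t
  have hbt : -(|b| * |t|) ≤ b * t := by rw [← abs_mul]; exact neg_abs_le _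
  simp only [penalty, hb, ne_eq, not_false_eq_true, if_true, mul_one, phi]
  split_ifs with ht
  · have := mul_sub_mul_sq_le_sq_div hl2 |b| (|t| - l1)
    rw [sq_abs] at this
    linarith [mul_sub |b| |t| l1]
  · have := two_sqrt_mul_mul_le hl0 hl2.le |b|
    nlinarith [abs_nonneg b, sq_abs b]

/-- Weak duality, sharpened by the strong concavity of the dual objective. -/
lemma dual_add_half_sum_sq_le_primal {l0 l2 : ℝ} (hl0 : 0 ≤ l0) (hl2 : 0 < l2) (l1 : ℝ)
    (X : Matrix m ι ℝ) (y : m → ℝ) (β : ι → ℝ) (αbar : m → ℝ)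
    (hαbar : ∀ i, αbar i = (∑ j, X i j * β j) - y i) (α : m → ℝ) :
    dual l0 l1 l2 X y α + (1 / 2) * ∑ i, (αbar i - α i) ^ 2 ≤ primal l0 l1 l2 X y β := by
  have hphi : ∑ j, phi l0 l1 l2 (∑ i, X i j * α i) ≤
      ∑ j, β j * ∑ i, X i j * α i + ∑ j, penalty l0 l1 l2 (β j) := by
    rw [← sum_add_distrib]
    exact sum_le_sum fun j _ => phi_le_mul_add_penalty hl0 hl2 l1 _ _
  have hswap : ∑ j, β j * ∑ i, X i j * α i = ∑ i, α i * (αbar i + y i) := by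
    simp only [hαbar, sub_add_cancel, mul_sum]
    rw [sum_comm]
    exact sum_congr rfl fun i _ => sum_congr rfl fun j _ => by ring
  have hquad : (1 / 2) * ∑ i, (y i - ∑ j, X i j * β j) ^ 2 + (1 / 2) * ∑ i, α i ^ 2
      + ∑ i, y i * α i - (1 / 2) * ∑ i, (αbar i - α i) ^ 2 = ∑ i, α i * (αbar i + y i) := by
    simp only [mul_sum, ← sum_add_distrib, ← sum_sub_distrib]
    exact sum_congr rfl fun i _ => by rw [hαbar]; ring
  unfold dual primal
  linarith

lemma abs_sum_mul_le_sqrt_mul_sqrt (f g : m → ℝ) :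
    |∑ i, f i * g i| ≤ √(∑ i, f i ^ 2) * √(∑ i, g i ^ 2) := by
  rw [← Real.sqrt_mul (sum_nonneg fun i _ => sq_nonneg _)]
  exact Real.abs_le_sqrt (sum_mul_sq_le_sq_mul_sq _ _ _)

end SafeScreening

end

open SafeScreening in
theorem statement_13_general (l0 l1 l2 : ℝ) (hl0 : 0 < l0) (hl2 : 0 < l2)
    (n p : ℕ) (X : Matrix (Fin n) (Fin p) ℝ) (y : Fin n → ℝ)
    (Φ : ℝ → ℝ)
    (hΦ : ∀ t : ℝ, Φ t =
      if 2 * Real.sqrt (l0 * l2) + l1 < |t| then l0 - (|t| - l1) ^ 2 / (4 * l2)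
      else 0)
    (P : (Fin p → ℝ) → ℝ)
    (hP : ∀ β : Fin p → ℝ, P β =
      (1 / 2) * (∑ i, (y i - ∑ j, X i j * β j) ^ 2)
        + l1 * (∑ j, |β j|) + l2 * (∑ j, (β j) ^ 2)
        + l0 * ((Finset.univ.filter fun j => β j ≠ 0).card : ℝ))
    (D : (Fin n → ℝ) → ℝ)
    (hD : ∀ α : Fin n → ℝ, D α =
      -(1 / 2) * (∑ i, (α i) ^ 2) - (∑ i, y i * α i)
        + ∑ j, Φ (∑ i, X i j * α i))
    (η : (Fin n → ℝ) → Fin p → ℝ)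
    (hη : ∀ (α : Fin n → ℝ) (j : Fin p), η α j = -(∑ i, X i j * α i) / (2 * l2))
    (βbar : Fin p → ℝ) (αbar : Fin n → ℝ)
    (hmin : ∀ β : Fin p → ℝ, P βbar ≤ P β)
    (hαbar : ∀ i, αbar i = (∑ j, X i j * βbar j) - y i)
    (hlink : ∀ j,
      (βbar j = 0 ∧ |η αbar j| ≤ (2 * Real.sqrt (l0 * l2) + l1) / (2 * l2)) ∨
      (βbar j = Real.sign (η αbar j) * (|η αbar j| - l1 / (2 * l2)) ∧
        (2 * Real.sqrt (l0 * l2) + l1) / (2 * l2) ≤ |η αbar j|)) :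
    ∀ (α : Fin n → ℝ) (β : Fin p → ℝ) (r : ℝ),
      r = Real.sqrt (2 * (P β - D α)) →
      ∀ j : Fin p,
        |∑ i, X i j * α i| + Real.sqrt (∑ i, (X i j) ^ 2) * r <
          2 * Real.sqrt (l0 * l2) + l1 →
        βbar j = 0 := by
  intro α β r hr j hj
  have hP' : P = primal l0 l1 l2 X y := funext fun β => by
    simp only [hP, primal, penalty, sum_add_distrib, ← mul_sum, sum_boole]
    ring
  have hD' : D = dual l0 l1 l2 X y := funext fun α => by
    simp only [hD, dual, phi, hΦ]
  have hball : √(∑ i, (αbar i - α i) ^ 2) ≤ r := by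
    rw [hr, hP', hD']
    gcongr
    have := dual_add_half_sum_sq_le_primal hl0.le hl2 l1 X y βbar αbar hαbar α
    linarith [hP' ▸ hmin β]
  have hcorr : |∑ i, X i j * αbar i| < 2 * √(l0 * l2) + l1 := calc
    |∑ i, X i j * αbar i| ≤ |∑ i, X i j * α i| + |∑ i, X i j * (αbar i - α i)| := by
      simpa [mul_sub] using abs_add_le (∑ i, X i j * α i) (∑ i, X i j * (αbar i - α i))
    _ ≤ |∑ i, X i j * α i| + √(∑ i, X i j ^ 2) * r := by
      gcongr
      exact (abs_sum_mul_le_sqrt_mul_sqrt _ _).trans (by gcongr)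
    _ < 2 * √(l0 * l2) + l1 := hj
  refine ((hlink j).resolve_right fun ⟨_, hfar⟩ => hcorr.not_ge ?_).1
  rwa [hη, abs_div, abs_neg, abs_of_pos (by positivity : (0 : ℝ) < 2 * l2),
    div_le_div_iff_of_pos_right (by positivity)] at hfar

/-- (Safe screening rule, inactive features.) If β̄ minimizes P,
ᾱ = Xβ̄ − y and the link condition holds, then for all α, β with
r = √(2(P(β) − D(α))), if |x₍·j₎ᵀα| + ‖x₍·j₎‖·r < 2√(λ₀λ₂) + λ₁ then β̄_j = 0. -/
theorem statement_13 (l0 l1 l2 : ℝ) (hl0 : 0 < l0) (hl1 : 0 < l1) (hl2 : 0 < l2)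
    (n p : ℕ) (X : Matrix (Fin n) (Fin p) ℝ) (y : Fin n → ℝ)
    (Φ : ℝ → ℝ)
    (hΦ : ∀ t : ℝ, Φ t =
      if 2 * Real.sqrt (l0 * l2) + l1 < |t| then l0 - (|t| - l1) ^ 2 / (4 * l2)
      else 0)
    (P : (Fin p → ℝ) → ℝ)
    (hP : ∀ β : Fin p → ℝ, P β =
      (1 / 2) * (∑ i, (y i - ∑ j, X i j * β j) ^ 2)
        + l1 * (∑ j, |β j|) + l2 * (∑ j, (β j) ^ 2)
        + l0 * ((Finset.univ.filter fun j => β j ≠ 0).card : ℝ))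
    (D : (Fin n → ℝ) → ℝ)
    (hD : ∀ α : Fin n → ℝ, D α =
      -(1 / 2) * (∑ i, (α i) ^ 2) - (∑ i, y i * α i)
        + ∑ j, Φ (∑ i, X i j * α i))
    (η : (Fin n → ℝ) → Fin p → ℝ)
    (hη : ∀ (α : Fin n → ℝ) (j : Fin p), η α j = -(∑ i, X i j * α i) / (2 * l2))
    (βbar : Fin p → ℝ) (αbar : Fin n → ℝ)
    (hmin : ∀ β : Fin p → ℝ, P βbar ≤ P β)
    (hαbar : ∀ i, αbar i = (∑ j, X i j * βbar j) - y i)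
    (hlink : ∀ j,
      (βbar j = 0 ∧ |η αbar j| ≤ (2 * Real.sqrt (l0 * l2) + l1) / (2 * l2)) ∨
      (βbar j = Real.sign (η αbar j) * (|η αbar j| - l1 / (2 * l2)) ∧
        (2 * Real.sqrt (l0 * l2) + l1) / (2 * l2) ≤ |η αbar j|)) :
    ∀ (α : Fin n → ℝ) (β : Fin p → ℝ) (r : ℝ),
      r = Real.sqrt (2 * (P β - D α)) →
      ∀ j : Fin p,
        |∑ i, X i j * α i| + Real.sqrt (∑ i, (X i j) ^ 2) * r <
          2 * Real.sqrt (l0 * l2) + l1 →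
        βbar j = 0 :=
  statement_13_general l0 l1 l2 hl0 hl2 n p X y Φ hΦ P hP D hD η hη βbar αbar hmin hαbar hlink
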